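/- Let 𝒰 be a universe and (X, L, s) a 𝒰-counting system, with ≤ the specialization preorder of the topology of closed subsets. Then for all x, z ∈ X: x ≤ z if and only if x ≤_s z, or there exists y ∈ X with x ≤_L y and y ≤_s z. Consequently, the closure of any I ⊆ X is Ī = s^{-∞}I ∪ ⋃{A ∈ dom L | L(A) ∈ s^{-∞}I}, where s^{-∞}I = ⋃_{m∈ℕ} s^{-m}I. -/

import Mathlib

namespace Paper

/-- The union `⋃_{i ∈ I} f(i)` of the values of `f` on elements of `I`. -/
noncomputable def unionImage (f : ZFSet → ZFSet) (I : ZFSet) : ZFSet :=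
  ZFSet.sUnion (@ZFSet.image f (Classical.allZFSetDefinable _) I)

/-- A universe: a transitive set closed under pairing and under unions of
`𝒰`-indexed families of elements of `𝒰`. -/
def IsUniverse (U : ZFSet) : Prop :=
  U.IsTransitive ∧
  (∀ x ∈ U, ∀ y ∈ U, ({x, y} : ZFSet) ∈ U) ∧
  (∀ I ∈ U, ∀ f : ZFSet → ZFSet, (∀ i ∈ I, f i ∈ U) → unionImage f I ∈ U)

variable {X : Type*}

/-- `A ∈ P_𝒰(X)`: the subset `A` of the type `X` is in bijection with some element of `𝒰`. -/
def SmallSet (U : ZFSet) (A : Set X) : Prop :=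
  ∃ B : ZFSet, B ∈ U ∧ Nonempty (A ≃ B.toSet)

/-- `x < y` in the sense `x ≤ y ∧ x ≠ y`, for an arbitrary relation `le`. -/
def ltR (le : X → X → Prop) (x y : X) : Prop := le x y ∧ x ≠ y

/-- The lower complement `S^↧ = {x | ∀ y ∈ S, x < y}`. -/
def lowerComp (le : X → X → Prop) (S : Set X) : Set X := {x | ∀ y ∈ S, ltR le x y}

/-- The upper complement `S^↑ = {x | ∀ y ∈ S, y < x}`. -/
def upperComp (le : X → X → Prop) (S : Set X) : Set X := {x | ∀ y ∈ S, ltR le y x}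

/-- `b` is the incremented join `⋁⁺S`, i.e. the minimum of `S^↑`. -/
def IsIncJoin (le : X → X → Prop) (S : Set X) (b : X) : Prop :=
  b ∈ upperComp le S ∧ ∀ c ∈ upperComp le S, le b c

/-- `b = x⁺`, i.e. `b = ⋁⁺{x}`. -/
def IsSuccOf (le : X → X → Prop) (x b : X) : Prop := IsIncJoin le {x} b

/-- `b` is the join (least upper bound) of `S`. -/
def IsJoin (le : X → X → Prop) (S : Set X) (b : X) : Prop :=
  (∀ y ∈ S, le y b) ∧ ∀ c, (∀ y ∈ S, le y c) → le b c

/-- An ordinal system relative to the universe `U`: a partial order satisfying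
(O1) lower complements of nonempty subsets lie in `P_𝒰(X)`, and
(O2) every member of `P_𝒰(X)` has an incremented join. -/
def IsOrdinalSystem (U : ZFSet) (le : X → X → Prop) : Prop :=
  IsPartialOrder X le ∧
  (∀ S : Set X, S.Nonempty → SmallSet U (lowerComp le S)) ∧
  (∀ S : Set X, SmallSet U S → ∃ b, IsIncJoin le S b)

/-- `I` is successor-closed: `s(I) ⊆ I`. -/
def SuccClosed (s : X → X) (I : Set X) : Prop := ∀ x ∈ I, s x ∈ I

/-- The domain of the limit function of a `𝒰`-counting system (axiom (C1)):
the successor-closed members of `P_𝒰(X)`. -/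
def LDom (U : ZFSet) (s : X → X) : Set (Set X) :=
  {I | SuccClosed s I ∧ SmallSet U I}

/-- A subset `J` is closed when `s⁻¹(J) ⊆ J` and `A ⊆ J` whenever `L(A) ∈ J`. -/
def IsClosedSub (U : ZFSet) (s : X → X) (L : ∀ I ∈ LDom U s, X) (J : Set X) : Prop :=
  (∀ x : X, s x ∈ J → x ∈ J) ∧
  (∀ A (h : A ∈ LDom U s), L A h ∈ J → A ⊆ J)

/-- The closure `Ī` of `I` in the topology of closed subsets: the intersection
of all closed subsets containing `I`. -/
def cl (U : ZFSet) (s : X → X) (L : ∀ I ∈ LDom U s, X) (I : Set X) : Set X :=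
  {x | ∀ J : Set X, IsClosedSub U s L J → I ⊆ J → x ∈ J}

/-- `x ≤_s y`: `s^m(x) = y` for some `m ∈ ℕ`. -/
def leS (s : X → X) (x y : X) : Prop := ∃ m : ℕ, s^[m] x = y

/-- `x ≤_L y`: `x ∈ I` and `L(I) = y` for some `I ∈ dom L`. -/
def leL (U : ZFSet) (s : X → X) (L : ∀ I ∈ LDom U s, X) (x y : X) : Prop :=
  ∃ I, ∃ h : I ∈ LDom U s, x ∈ I ∧ L I h = y

/-- The specialization preorder: `x ≤ y` iff `x ∈ cl {y}`. -/
def leSpec (U : ZFSet) (s : X → X) (L : ∀ I ∈ LDom U s, X) (x y : X) : Prop :=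
  x ∈ cl U s L {y}

/-- Axiom (C2): the limit function only depends on the closure of its argument. -/
def C2 (U : ZFSet) (s : X → X) (L : ∀ I ∈ LDom U s, X) : Prop :=
  ∀ I J (hI : I ∈ LDom U s) (hJ : J ∈ LDom U s),
    cl U s L I = cl U s L J → L I hI = L J hJ

/-- Axiom (C3): `s⁻¹{L(I)} = ∅` and `s(L(I)) ∉ I` for all `I ∈ dom L`. -/
def C3 (U : ZFSet) (s : X → X) (L : ∀ I ∈ LDom U s, X) : Prop :=
  ∀ I (h : I ∈ LDom U s), (∀ x : X, s x ≠ L I h) ∧ s (L I h) ∉ I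

/-- Axiom (C4): `s` is injective, and `L(I) = L(J)` implies `Ī = J̄`. -/
def C4 (U : ZFSet) (s : X → X) (L : ∀ I ∈ LDom U s, X) : Prop :=
  Function.Injective s ∧
  ∀ I J (hI : I ∈ LDom U s) (hJ : J ∈ LDom U s),
    L I hI = L J hJ → cl U s L I = cl U s L J

/-- Axiom (C5): the induction axiom. -/
def C5 (U : ZFSet) (s : X → X) (L : ∀ I ∈ LDom U s, X) : Prop :=
  ∀ J : Set X, SuccClosed s J →
    (∀ I (h : I ∈ LDom U s), I ⊆ J → L I h ∈ J) → J = Set.univ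


/-!
The closure of `I` is the set `C = s^{-∞}I ∪ ⋃{A ∈ dom L | L(A) ∈ s^{-∞}I}`: every closed set
containing `I` visibly contains `C`, so the point is that `C` is itself closed. Both closure
conditions come down to (C2): if `s x ∈ A` then `A ∪ {x}` has the same closure as `A`, and if
`L(A) ∈ B` then `B ∪ A` has the same closure as `B`; in either case the enlarged set is still in
`dom L`, hence has the same limit. The universe axioms are what keep the enlarged sets small.
-/

section Universe

variable {U : ZFSet}

lemma mem_unionImage {f : ZFSet → ZFSet} {I z : ZFSet} :
    z ∈ unionImage f I ↔ ∃ i ∈ I, z ∈ f i := by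
  simp only [unionImage, ZFSet.mem_sUnion, @ZFSet.mem_image f (Classical.allZFSetDefinable _)]
  grind

lemma IsUniverse.insert_mem (hU : IsUniverse U) {x y : ZFSet} (hx : x ∈ U) (hy : y ∈ U) :
    insert y x ∈ U := by
  have hyy : ({y, y} : ZFSet) ∈ U := hU.2.1 y hy y hy
  have hunion := hU.2.2 _ (hU.2.1 x hx _ hyy) id (by
    rintro i hi
    rcases ZFSet.mem_pair.mp hi with rfl | rfl
    exacts [hx, hyy])
  convert hunion using 1
  ext z
  rw [mem_unionImage, ZFSet.mem_insert_iff]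
  simp only [ZFSet.mem_pair, id, exists_eq_or_imp, exists_eq_left, or_self]
  exact or_comm

variable {X : Type*}

lemma SmallSet.of_equiv {A B : Set X} (hA : SmallSet U A) (e : A ≃ B) : SmallSet U B :=
  let ⟨C, hC, ⟨e'⟩⟩ := hA
  ⟨C, hC, ⟨e.symm.trans e'⟩⟩

/-- Regularity gives `C ∉ C`, so `insert C C` witnesses the smallness of `insert x A`. -/
lemma SmallSet.insert (hU : IsUniverse U) {A : Set X} (hA : SmallSet U A) (x : X) :
    SmallSet U (insert x A) := by
  classical
  by_cases hx : x ∈ A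
  · rwa [Set.insert_eq_of_mem hx]
  obtain ⟨C, hC, ⟨e⟩⟩ := hA
  have hCC : C ∉ (C : Set ZFSet) := ZFSet.mem_irrefl C
  refine ⟨Insert.insert C C, hU.insert_mem hC hC, ⟨?_⟩⟩
  exact (Equiv.Set.insert hx).trans ((e.sumCongr Equiv.punitEquivPUnit).trans
    ((Equiv.Set.insert hCC).symm.trans (Equiv.setCongr (ZFSet.coe_insert C C).symm)))

lemma SmallSet.union_of_finite (hU : IsUniverse U) {A F : Set X} (hA : SmallSet U A)
    (hF : F.Finite) : SmallSet U (A ∪ F) := by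
  induction F, hF using Set.Finite.induction_on with
  | empty => rwa [Set.union_empty]
  | insert _ _ ih => rw [Set.union_insert]; exact ih.insert hU _

lemma SmallSet.union (hU : IsUniverse U) {A B : Set X} (hA : SmallSet U A)
    (hB : SmallSet U B) : SmallSet U (A ∪ B) := by
  wlog hBA : Cardinal.mk B ≤ Cardinal.mk A generalizing A B
  · rw [Set.union_comm]
    exact this hB hA (le_of_not_ge hBA)
  by_cases hAfin : A.Finite
  · have hBfin : B.Finite := Cardinal.lt_aleph0_iff_set_finite.mp
      (hBA.trans_lt (Cardinal.lt_aleph0_iff_set_finite.mpr hAfin))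
    exact hA.union_of_finite hU hBfin
  have hAinf : Cardinal.aleph0 ≤ Cardinal.mk A :=
    Cardinal.infinite_iff.mp (Set.infinite_coe_iff.mpr hAfin)
  have hcard : Cardinal.mk ↥(A ∪ B) = Cardinal.mk A := by
    refine le_antisymm ?_ (Cardinal.mk_le_mk_of_subset Set.subset_union_left)
    calc Cardinal.mk ↥(A ∪ B) ≤ Cardinal.mk A + Cardinal.mk B := Cardinal.mk_union_le A B
      _ = Cardinal.mk A := by rw [Cardinal.add_eq_max hAinf, max_eq_left hBA]
  exact hA.of_equiv (Classical.choice (Cardinal.eq.mp hcard.symm))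

end Universe

section Closure

variable {U : ZFSet} {X : Type*} {s : X → X} {L : ∀ I ∈ LDom U s, X}

lemma isClosedSub_cl (I : Set X) : IsClosedSub U s L (cl U s L I) :=
  ⟨fun x hx J hJ hIJ => hJ.1 x (hx J hJ hIJ),
    fun A hA hLA _ ha J hJ hIJ => hJ.2 A hA (hLA J hJ hIJ) ha⟩

lemma subset_cl (I : Set X) : I ⊆ cl U s L I := fun _ hx _ _ hIJ => hIJ hx

lemma cl_subset {I J : Set X} (hJ : IsClosedSub U s L J) (hIJ : I ⊆ J) : cl U s L I ⊆ J :=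
  fun _ hx => hx J hJ hIJ

lemma cl_eq_of_subset_of_subset_cl {A B : Set X} (hAB : A ⊆ B) (hBA : B ⊆ cl U s L A) :
    cl U s L B = cl U s L A :=
  (cl_subset (isClosedSub_cl A) hBA).antisymm
    (cl_subset (isClosedSub_cl B) (hAB.trans (subset_cl B)))

lemma IsClosedSub.mem_of_iterate_mem {J : Set X} (hJ : IsClosedSub U s L J) {m : ℕ} {x : X}
    (hx : s^[m] x ∈ J) : x ∈ J := by
  induction m generalizing x with
  | zero => exact hx
  | succ m ih => exact hJ.1 x (ih (by rwa [← Function.iterate_succ_apply]))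

lemma C2.L_eq_of_subset_of_subset_cl (hC2 : C2 U s L) {A B : Set X} (hA : A ∈ LDom U s)
    (hB : B ∈ LDom U s) (hAB : A ⊆ B) (hBA : B ⊆ cl U s L A) : L B hB = L A hA :=
  hC2 B A hB hA (cl_eq_of_subset_of_subset_cl hAB hBA)

end Closure

section CountingSystem

variable {U : ZFSet} {X : Type*} {s : X → X} {L : ∀ I ∈ LDom U s, X}

lemma insert_mem_LDom (hU : IsUniverse U) {A : Set X} (hA : A ∈ LDom U s) {x : X}
    (hx : s x ∈ A) : insert x A ∈ LDom U s := by
  refine ⟨?_, hA.2.insert hU x⟩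
  rintro y (rfl | hy)
  · exact Set.mem_insert_of_mem _ hx
  · exact Set.mem_insert_of_mem _ (hA.1 y hy)

lemma union_mem_LDom (hU : IsUniverse U) {A B : Set X} (hA : A ∈ LDom U s)
    (hB : B ∈ LDom U s) : A ∪ B ∈ LDom U s := by
  refine ⟨?_, hA.2.union hU hB.2⟩
  rintro y (hy | hy)
  · exact Or.inl (hA.1 y hy)
  · exact Or.inr (hB.1 y hy)

/-- The paper's `s^{-∞}I = ⋃ₘ s^{-m}I`. -/
def iterPreimage (s : X → X) (I : Set X) : Set X := {x | ∃ m : ℕ, s^[m] x ∈ I}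

lemma isClosedSub_union_of_preimage_subset (hU : IsUniverse U) (hC2 : C2 U s L) (S : Set X)
    (hS : ∀ x, s x ∈ S → x ∈ S) :
    IsClosedSub U s L (S ∪ {x | ∃ A, ∃ h : A ∈ LDom U s, x ∈ A ∧ L A h ∈ S}) := by
  constructor
  · rintro x (hx | ⟨A, hA, hxA, hLA⟩)
    · exact Or.inl (hS x hx)
    · have hA' := insert_mem_LDom hU hA hxA
      have hsub : insert x A ⊆ cl U s L A :=
        Set.insert_subset ((isClosedSub_cl A).1 x (subset_cl A hxA)) (subset_cl A)
      refine Or.inr ⟨insert x A, hA', Set.mem_insert x A, ?_⟩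
      rwa [hC2.L_eq_of_subset_of_subset_cl hA hA' (Set.subset_insert x A) hsub]
  · rintro A hA (hLA | ⟨B, hB, hLAB, hLB⟩) a ha
    · exact Or.inr ⟨A, hA, ha, hLA⟩
    · have hBA := union_mem_LDom hU hB hA
      have hsub : B ∪ A ⊆ cl U s L B :=
        Set.union_subset (subset_cl B) ((isClosedSub_cl B).2 A hA (subset_cl B hLAB))
      refine Or.inr ⟨B ∪ A, hBA, Or.inr ha, ?_⟩
      rwa [hC2.L_eq_of_subset_of_subset_cl hB hBA Set.subset_union_left hsub]

theorem cl_eq_iterPreimage_union (hU : IsUniverse U) (hC2 : C2 U s L) (I : Set X) :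
    cl U s L I = iterPreimage s I ∪
      {x | ∃ A, ∃ h : A ∈ LDom U s, x ∈ A ∧ L A h ∈ iterPreimage s I} := by
  refine (cl_subset (isClosedSub_union_of_preimage_subset hU hC2 _ ?_) ?_).antisymm ?_
  · rintro x ⟨m, hm⟩
    exact ⟨m + 1, hm⟩
  · exact fun x hx => Or.inl ⟨0, hx⟩
  · rintro x (⟨m, hm⟩ | ⟨A, hA, hxA, m, hm⟩) J hJ hIJ
    · exact hJ.mem_of_iterate_mem (hIJ hm)
    · exact hJ.2 A hA (hJ.mem_of_iterate_mem (hIJ hm)) hxA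

theorem leSpec_iff (hU : IsUniverse U) (hC2 : C2 U s L) (x z : X) :
    leSpec U s L x z ↔ leS s x z ∨ ∃ y, leL U s L x y ∧ leS s y z := by
  simp only [leSpec, cl_eq_iterPreimage_union hU hC2, iterPreimage, leS, leL,
    Set.mem_union, Set.mem_ofPred_eq, Set.mem_singleton_iff]
  constructor
  · rintro (hxz | ⟨A, hA, hxA, hLA⟩)
    · exact Or.inl hxz
    · exact Or.inr ⟨L A hA, ⟨A, hA, hxA, rfl⟩, hLA⟩
  · rintro (hxz | ⟨_, ⟨A, hA, hxA, rfl⟩, hLA⟩)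
    · exact Or.inl hxz
    · exact Or.inr ⟨A, hA, hxA, hLA⟩

end CountingSystem

theorem stmt_17 (U : ZFSet) (hU : IsUniverse U) {X : Type*}
    (s : X → X) (L : ∀ I ∈ LDom U s, X) (hC2 : C2 U s L) :
    (∀ x z : X, leSpec U s L x z ↔
      (leS s x z ∨ ∃ y : X, leL U s L x y ∧ leS s y z)) ∧
    (∀ I : Set X, cl U s L I =
      {x : X | ∃ m : ℕ, s^[m] x ∈ I} ∪
      {x : X | ∃ A, ∃ h : A ∈ LDom U s, x ∈ A ∧
        L A h ∈ {x : X | ∃ m : ℕ, s^[m] x ∈ I}}) := by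
  exact ⟨leSpec_iff hU hC2, cl_eq_iterPreimage_union hU hC2⟩

end Paper
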